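/- Let g_est be the average of b i.i.d. random vectors with mean G and component-variance sum tr(Σ) (i.e., the covariance matrix of g_est is Σ/b). Then the local estimators 𝒢_i = (B|g|² − b_i|g_i|²)/(B − b_i) and 𝒮_i = b_i B(|g_i|² − |g|²)/(B − b_i) satisfy E[𝒢_i] = |G|² and E[𝒮_i] = tr(Σ), using the identity E[|g_est|²] = |G|² + tr(Σ)/b for a batch of size b. -/
import Mathlib


open MeasureTheory

/-- Unbiasedness of the local gradient-noise-scale estimators: if
`E[|g|²] = |G|² + tr(Σ)/B` and `E[|g_i|²] = |G|² + tr(Σ)/b_i`, then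
`𝒢_i = (B|g|² − b_i|g_i|²)/(B − b_i)` and `𝒮_i = b_i B (|g_i|² − |g|²)/(B − b_i)`
have expectations `|G|²` and `tr(Σ)` respectively. -/
theorem stmt_5 {Ω : Type*} [MeasurableSpace Ω] (μ : Measure Ω) [IsProbabilityMeasure μ]
    (G2 trSigma B bi : ℝ) (hbi : 0 < bi) (hBbi : bi < B)
    (X Xi : Ω → ℝ) (hX : Integrable X μ) (hXi : Integrable Xi μ)
    (hEX : (∫ ω, X ω ∂μ) = G2 + trSigma / B)
    (hEXi : (∫ ω, Xi ω ∂μ) = G2 + trSigma / bi) :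
    ((∫ ω, (B * X ω - bi * Xi ω) / (B - bi) ∂μ) = G2) ∧
    ((∫ ω, (bi * B / (B - bi)) * (Xi ω - X ω) ∂μ) = trSigma) := by
  have hB : (0:ℝ) < B := hbi.trans hBbi
  have hne : B - bi ≠ 0 := sub_ne_zero.mpr (ne_of_gt hBbi)
  have h1 : (∫ ω, (B * X ω - bi * Xi ω) / (B - bi) ∂μ)
      = ((B * ∫ ω, X ω ∂μ) - bi * ∫ ω, Xi ω ∂μ) / (B - bi) := by
    rw [integral_div, integral_sub (hX.const_mul B) (hXi.const_mul bi),
      integral_const_mul, integral_const_mul]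
  have h2 : (∫ ω, (bi * B / (B - bi)) * (Xi ω - X ω) ∂μ)
      = (bi * B / (B - bi)) * ((∫ ω, Xi ω ∂μ) - ∫ ω, X ω ∂μ) := by
    rw [integral_const_mul, integral_sub hXi hX]
  constructor
  · rw [h1, hEX, hEXi]
    field_simp
    ring
  · rw [h2, hEX, hEXi]
    field_simp
    ring
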